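/- arXiv:2203.08963 — 6 statements merged into one kernel-verified Lean document; each statement's English description precedes it below -/
import Mathlib

section
/- Let g be an integer with g ≥ 2 and let n, m, k_n be integers with n ≥ 3, m ≥ 5, and k_n ≥ 2. If k_n·(n·m − 2m − 2n) = 4(g−1)·m, then 3n ≤ 10g. -/
theorem stmt_5 (g n m kn : ℤ) (hg : 2 ≤ g) (hn : 3 ≤ n) (hm : 5 ≤ m)
    (hkn : 2 ≤ kn)
    (heq : kn * (n * m - 2 * m - 2 * n) = 4 * (g - 1) * m) :
    3 * n ≤ 10 * g := by
  have hX : 0 < n * m - 2 * m - 2 * n := by nlinarith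
  have h2 : 2 * (n * m - 2 * m - 2 * n) ≤ 4 * (g - 1) * m := by nlinarith
  rcases le_or_gt n (2 * g) with h | h
  · linarith
  · nlinarith [mul_nonneg (by linarith : (0:ℤ) ≤ m - 5) (by linarith : (0:ℤ) ≤ n - 2*g)]
end

section
/- Let g be an integer with g ≥ 2 and let n, m, k_n, k_m be positive integers with 3 ≤ n ≤ m, 5 ≤ m, k_n·n = k_m·m, and k_n·(n·m − 2m − 2n) = 4(g−1)·m. Then n ≤ m ≤ 12g − 6, k_m ≤ k_n, and k_n ≤ 4(g−1)·(12g−6). -/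
theorem stmt_7 (g n m kn km : ℤ) (hg : 2 ≤ g)
    (hn : 3 ≤ n) (hnm : n ≤ m) (hm : 5 ≤ m)
    (hkn : 0 < kn) (hkm : 0 < km)
    (hedge : kn * n = km * m)
    (heq : kn * (n * m - 2 * m - 2 * n) = 4 * (g - 1) * m) :
    n ≤ m ∧ m ≤ 12 * g - 6 ∧ km ≤ kn ∧ kn ≤ 4 * (g - 1) * (12 * g - 6) := by
  -- positivity of the curvature term
  have hP : 1 ≤ n * m - 2 * m - 2 * n := by nlinarith
  -- km ≤ kn
  have hmk : km ≤ kn := by nlinarith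
  -- key identities
  have hA : kn * (n - 2) = 4 * (g - 1) + 2 * km := by
    have h5 : (kn * (n - 2) - (4 * (g - 1) + 2 * km)) * m = 0 := by
      linear_combination heq + 2 * hedge
    rcases mul_eq_zero.mp h5 with h | h
    · linarith
    · linarith
  have hB : km * (m - 2) = 4 * (g - 1) + 2 * kn := by
    have h5 : (km * (m - 2) - (4 * (g - 1) + 2 * kn)) * m = 0 := by
      linear_combination heq - (m - 2) * hedge
    rcases mul_eq_zero.mp h5 with h | h
    · linarith
    · linarith
  -- kn ≤ 4(g-1)+2km  (since n-2 ≥ 1)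
  have hknb : kn ≤ 4 * (g - 1) + 2 * km := by nlinarith
  -- km*(m-6) ≤ 12(g-1)
  have hm6 : km * (m - 6) ≤ 12 * (g - 1) := by nlinarith
  -- m bound
  have hmb : m ≤ 12 * g - 6 := by
    rcases le_or_gt m 18 with h | h
    · linarith
    · nlinarith
  refine ⟨hnm, hmb, hmk, ?_⟩
  have h1 : kn ≤ 4 * (g - 1) * m := by nlinarith
  nlinarith
end

section
/- For every integer g ≥ 2, the set of quadruples (n, m, k_n, k_m) of positive integers satisfying n ≥ 3, m ≥ 3, k_n·n = k_m·m, and k_n·(n·m − 2m − 2n) = 4(g−1)·m is finite. -/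
lemma stmt_8_helper (A x y s t : ℤ) (hA : 4 ≤ A) (hx : 1 ≤ x) (hy : 1 ≤ y)
    (hs : 1 ≤ s) (ht : 1 ≤ t) (e1 : x * s = A + 2 * y) (e2 : y * t = A + 2 * x) :
    x ≤ 17 * A ∧ y ≤ 17 * A ∧ s ≤ 17 * A ∧ t ≤ 17 * A := by
  have key : x * (s * t - 4) = A * (t + 2) := by linear_combination t * e1 + 2 * e2
  have key2 : y * (s * t - 4) = A * (s + 2) := by linear_combination s * e2 + 2 * e1
  have st5 : 1 ≤ s * t - 4 := by nlinarith [key]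
  rcases le_or_gt 5 s with hs5 | hs4
  · -- s ≥ 5 : x ≤ 3A, then t ≤ 7A, y ≤ 7A, s ≤ 15A
    have hx3 : x ≤ 3 * A := by nlinarith [key, mul_pos (lt_of_lt_of_le zero_lt_one hx) (lt_of_lt_of_le zero_lt_one ht)]
    have ht7 : t ≤ 7 * A := by nlinarith [e2]
    have hy7 : y ≤ 7 * A := by nlinarith [e2]
    have hs15 : s ≤ 15 * A := by nlinarith [e1]
    exact ⟨by linarith, by linarith, by linarith, by linarith⟩
  · rcases le_or_gt 5 t with ht5 | ht4
    · -- t ≥ 5 : y ≤ 3A, then s ≤ 7A, x ≤ 7A, t ≤ 15A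
      have hy3 : y ≤ 3 * A := by nlinarith [key2, mul_pos (lt_of_lt_of_le zero_lt_one hy) (lt_of_lt_of_le zero_lt_one hs)]
      have hs7 : s ≤ 7 * A := by nlinarith [e1]
      have hx7 : x ≤ 7 * A := by nlinarith [e1]
      have ht15 : t ≤ 15 * A := by nlinarith [e2]
      exact ⟨by linarith, by linarith, by linarith, by linarith⟩
    · -- s ≤ 4, t ≤ 4 : x ≤ 6A, y ≤ 6A
      have hx6 : x ≤ 6 * A := by nlinarith [key]
      have hy6 : y ≤ 6 * A := by nlinarith [key2]
      exact ⟨by linarith, by linarith, by linarith, by linarith⟩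

theorem stmt_8 (g : ℤ) (hg : 2 ≤ g) :
    {q : ℤ × ℤ × ℤ × ℤ |
      0 < q.1 ∧ 0 < q.2.1 ∧ 0 < q.2.2.1 ∧ 0 < q.2.2.2 ∧
      3 ≤ q.1 ∧ 3 ≤ q.2.1 ∧
      q.2.2.1 * q.1 = q.2.2.2 * q.2.1 ∧
      q.2.2.1 * (q.1 * q.2.1 - 2 * q.2.1 - 2 * q.1) = 4 * (g - 1) * q.2.1}.Finite := by
  set A : ℤ := 4 * (g - 1) with hA
  have hA4 : 4 ≤ A := by omega
  set B : ℤ := 17 * A + 2 with hB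
  apply Set.Finite.subset
    ((Set.finite_Icc (1 : ℤ) B).prod ((Set.finite_Icc (1 : ℤ) B).prod
      ((Set.finite_Icc (1 : ℤ) B).prod (Set.finite_Icc (1 : ℤ) B))))
  rintro ⟨n, m, x, y⟩ ⟨hn0, hm0, hx0, hy0, hn3, hm3, h1, h2⟩
  dsimp only at hn0 hm0 hx0 hy0 hn3 hm3 h1 h2
  -- derive key equations
  have hm0' : (m : ℤ) ≠ 0 := by omega
  have keyz : m * (y * m - 2 * x - 2 * y - A) = 0 := by linear_combination h2 + 2 * h1 - m * h1
  have E2 : y * (m - 2) = A + 2 * x := by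
    rcases mul_eq_zero.mp keyz with h | h
    · exact absurd h hm0'
    · linarith
  have E1 : x * (n - 2) = A + 2 * y := by linear_combination h1 + E2
  obtain ⟨bx, by', bs, bt⟩ := stmt_8_helper A x y (n - 2) (m - 2) hA4
    (by omega) (by omega) (by omega) (by omega) E1 E2
  refine ⟨⟨?_, ?_⟩, ⟨?_, ?_⟩, ⟨?_, ?_⟩, ?_, ?_⟩ <;> simp [Set.mem_Icc] <;> omega
end

section
/- Let g be an integer with g ≥ 2 and let S be the set of pairs (n, m) of positive integers such that 3 ≤ n ≤ m, 5 ≤ m, and there exist positive integers k_n, k_m with k_n·n = k_m·m and k_n·(n·m − 2m − 2n) = 4(g−1)·m. Then S is finite and 9·|S| ≤ 310g² − 303g + 36 (equivalently, |S| ≤ 310g²/9 − 101g/3 + 4). -/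
lemma card_Icc_int (a b : ℤ) (h : a ≤ b + 1) :
    ((Finset.Icc a b).card : ℤ) = b + 1 - a := by
  rw [Int.card_Icc]
  exact Int.toNat_of_nonneg (by linarith)

theorem stmt_9 (g : ℤ) (hg : 2 ≤ g) :
    letI S : Set (ℤ × ℤ) :=
      {p | 3 ≤ p.1 ∧ p.1 ≤ p.2 ∧ 5 ≤ p.2 ∧
        ∃ kn km : ℤ, 0 < kn ∧ 0 < km ∧ kn * p.1 = km * p.2 ∧
          kn * (p.1 * p.2 - 2 * p.2 - 2 * p.1) = 4 * (g - 1) * p.2}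
    S.Finite ∧ 9 * (S.ncard : ℤ) ≤ 310 * g ^ 2 - 303 * g + 36 := by
  set S : Set (ℤ × ℤ) :=
    {p | 3 ≤ p.1 ∧ p.1 ≤ p.2 ∧ 5 ≤ p.2 ∧
      ∃ kn km : ℤ, 0 < kn ∧ 0 < km ∧ kn * p.1 = km * p.2 ∧
        kn * (p.1 * p.2 - 2 * p.2 - 2 * p.1) = 4 * (g - 1) * p.2} with hS
  set T : Finset (ℤ × ℤ) :=
    (Finset.Icc 3 5 ×ˢ Finset.Icc 5 (12 * g - 6)) ∪
    (Finset.Icc 6 (4 * g) ×ˢ Finset.Icc 6 (6 * g - 3)) with hT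
  have hsub : S ⊆ (T : Set (ℤ × ℤ)) := by
    rintro ⟨n, m⟩ ⟨h3, hnm, h5, kn, km, hkn, hkm, heq1, heq2⟩
    simp only at h3 hnm h5 heq1 heq2
    have hX : 0 < n * m - 2 * m - 2 * n := by
      by_contra h
      push_neg at h
      have h1 : kn * (n * m - 2 * m - 2 * n) ≤ 0 :=
        mul_nonpos_of_nonneg_of_nonpos hkn.le h
      nlinarith
    have heq2' : km * (n * m - 2 * m - 2 * n) = 4 * (g - 1) * n := by
      have hm0 : m ≠ 0 := by linarith
      apply mul_left_cancel₀ hm0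
      linear_combination (n * m - 2 * m - 2 * n) * heq1.symm + n * heq2
    have hle : n * m - 2 * m - 2 * n ≤ km * (n * m - 2 * m - 2 * n) :=
      le_mul_of_one_le_left hX.le hkm
    have hkey : m * (n - 2) ≤ (4 * g - 2) * n := by nlinarith
    have hn4g : n ≤ 4 * g := by
      nlinarith [mul_le_mul_of_nonneg_right hnm (by linarith : (0:ℤ) ≤ n - 2)]
    have hm12 : m ≤ 12 * g - 6 := by nlinarith
    simp only [hT, Finset.mem_coe, Finset.mem_union, Finset.mem_product,
      Finset.mem_Icc]
    rcases le_or_gt n 5 with h | h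
    · exact Or.inl ⟨⟨h3, h⟩, h5, hm12⟩
    · refine Or.inr ⟨⟨h, hn4g⟩, by linarith, ?_⟩
      nlinarith
  refine ⟨Set.Finite.subset T.finite_toSet hsub, ?_⟩
  have hcard : S.ncard ≤ T.card := by
    have := Set.ncard_le_ncard hsub T.finite_toSet
    simpa [Set.ncard_coe_finset] using this
  have hTc : (T.card : ℤ) ≤ 3 * (12 * g - 10) + (4 * g - 5) * (6 * g - 8) := by
    have h1 := Finset.card_union_le
      (Finset.Icc (3:ℤ) 5 ×ˢ Finset.Icc 5 (12 * g - 6))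
      (Finset.Icc (6:ℤ) (4 * g) ×ˢ Finset.Icc 6 (6 * g - 3))
    have e1 : ((Finset.Icc (3:ℤ) 5).card : ℤ) = 3 := by
      rw [card_Icc_int] <;> norm_num
    have e2 : ((Finset.Icc (5:ℤ) (12 * g - 6)).card : ℤ) = 12 * g - 10 := by
      rw [card_Icc_int] <;> linarith
    have e3 : ((Finset.Icc (6:ℤ) (4 * g)).card : ℤ) = 4 * g - 5 := by
      rw [card_Icc_int] <;> linarith
    have e4 : ((Finset.Icc (6:ℤ) (6 * g - 3)).card : ℤ) = 6 * g - 8 := by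
      rw [card_Icc_int] <;> linarith
    have h2 : (T.card : ℤ) ≤
        ((Finset.Icc (3:ℤ) 5 ×ˢ Finset.Icc 5 (12 * g - 6)).card : ℤ) +
        ((Finset.Icc (6:ℤ) (4 * g) ×ˢ Finset.Icc 6 (6 * g - 3)).card : ℤ) := by
      rw [hT]; exact_mod_cast h1
    rw [Finset.card_product, Finset.card_product] at h2
    push_cast at h2
    rw [e1, e2, e3, e4] at h2
    linarith
  have : (S.ncard : ℤ) ≤ (T.card : ℤ) := by exact_mod_cast hcard
  nlinarith
end

section
/- Let S₂ be the set of quadruples (m, n, k_m, k_n) of positive integers with 3 ≤ n ≤ m, 5 ≤ m, k_n·n = k_m·m, and k_n·(n·m − 2m − 2n) = 4·m. Then S₂ consists of exactly the following 14 quadruples: (5,4,8,10), (6,4,4,6), (7,3,12,28), (8,3,6,16), (8,4,2,4), (9,3,4,12), (10,3,3,10), (10,5,1,2), (12,3,2,8), (12,4,1,3), (18,3,1,6), (8,8,1,1), (6,6,2,2), (5,5,4,4). -/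
set_option maxHeartbeats 1000000 in

theorem stmt_14 :
    {q : ℤ × ℤ × ℤ × ℤ |
      0 < q.1 ∧ 0 < q.2.1 ∧ 0 < q.2.2.1 ∧ 0 < q.2.2.2 ∧
      3 ≤ q.2.1 ∧ q.2.1 ≤ q.1 ∧ 5 ≤ q.1 ∧
      q.2.2.2 * q.2.1 = q.2.2.1 * q.1 ∧
      q.2.2.2 * (q.2.1 * q.1 - 2 * q.1 - 2 * q.2.1) = 4 * q.1} =
    ({(5,4,8,10), (6,4,4,6), (7,3,12,28), (8,3,6,16), (8,4,2,4), (9,3,4,12),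
      (10,3,3,10), (10,5,1,2), (12,3,2,8), (12,4,1,3), (18,3,1,6),
      (8,8,1,1), (6,6,2,2), (5,5,4,4)} : Set (ℤ × ℤ × ℤ × ℤ)) := by
  ext ⟨m, n, km, kn⟩
  simp only [Set.mem_setOf_eq, Set.mem_insert_iff, Set.mem_singleton_iff, Prod.mk.injEq]
  constructor
  · rintro ⟨hm, hn, hkm, hkn, hn3, hnm, hm5, he1, he2⟩
    -- D := n*m - 2*m - 2*n > 0
    have hD : 0 < n*m - 2*m - 2*n := by
      by_contra h
      push_neg at h
      nlinarith [mul_nonneg hkn.le (by linarith : (0:ℤ) ≤ -(n*m - 2*m - 2*n))]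
    -- kn * n ≥ m (since km ≥ 1)
    have hknn : m ≤ kn * n := by nlinarith [mul_le_mul_of_nonneg_right hkm hm.le]
    -- D ≤ 4n
    have hD4 : n*m - 2*m - 2*n ≤ 4*n := by
      by_contra h
      push_neg at h
      nlinarith [mul_le_mul_of_nonneg_left h.le hkn.le]
    -- n ≤ 8
    have hn8 : n ≤ 8 := by nlinarith
    -- m ≤ 18
    have hm18 : m ≤ 18 := by nlinarith
    have hn' : n = 3 ∨ n = 4 ∨ n = 5 ∨ n = 6 ∨ n = 7 ∨ n = 8 := by omega
    have hm' : m = 5 ∨ m = 6 ∨ m = 7 ∨ m = 8 ∨ m = 9 ∨ m = 10 ∨ m = 11 ∨ m = 12 ∨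
        m = 13 ∨ m = 14 ∨ m = 15 ∨ m = 16 ∨ m = 17 ∨ m = 18 := by omega
    rcases hn' with rfl|rfl|rfl|rfl|rfl|rfl <;>
      rcases hm' with rfl|rfl|rfl|rfl|rfl|rfl|rfl|rfl|rfl|rfl|rfl|rfl|rfl|rfl <;>
      · norm_num
        omega
  · rintro (⟨rfl,rfl,rfl,rfl⟩|⟨rfl,rfl,rfl,rfl⟩|⟨rfl,rfl,rfl,rfl⟩|⟨rfl,rfl,rfl,rfl⟩|
      ⟨rfl,rfl,rfl,rfl⟩|⟨rfl,rfl,rfl,rfl⟩|⟨rfl,rfl,rfl,rfl⟩|⟨rfl,rfl,rfl,rfl⟩|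
      ⟨rfl,rfl,rfl,rfl⟩|⟨rfl,rfl,rfl,rfl⟩|⟨rfl,rfl,rfl,rfl⟩|⟨rfl,rfl,rfl,rfl⟩|
      ⟨rfl,rfl,rfl,rfl⟩|⟨rfl,rfl,rfl,rfl⟩) <;> norm_num
end

section
/- Let S₃ be the set of quadruples (m, n, k_m, k_n) of positive integers with 3 ≤ n ≤ m, 5 ≤ m, k_n·n = k_m·m, and k_n·(n·m − 2m − 2n) = 8·m. Then S₃ consists of exactly the following 21 quadruples: (5,4,16,20), (6,4,8,12), (6,5,5,6), (7,3,24,56), (8,3,12,32), (8,4,4,8), (9,3,8,24), (9,6,2,3), (10,3,6,20), (10,5,2,4), (12,3,4,16), (12,4,2,6), (14,3,3,14), (14,7,1,2), (18,3,2,12), (20,4,1,5), (30,3,1,10), (12,12,1,1), (8,8,2,2), (6,6,4,4), (5,5,8,8). -/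
set_option maxHeartbeats 2000000 in
private lemma aux3 (m km kn : ℤ) (hkm : 0 < km) (hkn : 0 < kn)
    (h5 : 5 ≤ m) (hnm : 3 ≤ m) (hb : m ≤ 54)
    (he : kn * 3 = km * m)
    (hq : kn * (3 * m - 2 * m - 2 * 3) = 8 * m) :
    (m = 7 ∧ km = 24 ∧ kn = 56) ∨
      (m = 8 ∧ km = 12 ∧ kn = 32) ∨
      (m = 9 ∧ km = 8 ∧ kn = 24) ∨
      (m = 10 ∧ km = 6 ∧ kn = 20) ∨
      (m = 12 ∧ km = 4 ∧ kn = 16) ∨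
      (m = 14 ∧ km = 3 ∧ kn = 14) ∨
      (m = 18 ∧ km = 2 ∧ kn = 12) ∨
      (m = 30 ∧ km = 1 ∧ kn = 10) := by
  interval_cases m <;> omega

set_option maxHeartbeats 2000000 in
private lemma aux4 (m km kn : ℤ) (hkm : 0 < km) (hkn : 0 < kn)
    (h5 : 5 ≤ m) (hnm : 4 ≤ m) (hb : m ≤ 36)
    (he : kn * 4 = km * m)
    (hq : kn * (4 * m - 2 * m - 2 * 4) = 8 * m) :
    (m = 5 ∧ km = 16 ∧ kn = 20) ∨
      (m = 6 ∧ km = 8 ∧ kn = 12) ∨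
      (m = 8 ∧ km = 4 ∧ kn = 8) ∨
      (m = 12 ∧ km = 2 ∧ kn = 6) ∨
      (m = 20 ∧ km = 1 ∧ kn = 5) := by
  interval_cases m <;> omega

set_option maxHeartbeats 2000000 in
private lemma aux5 (m km kn : ℤ) (hkm : 0 < km) (hkn : 0 < kn)
    (h5 : 5 ≤ m) (hnm : 5 ≤ m) (hb : m ≤ 30)
    (he : kn * 5 = km * m)
    (hq : kn * (5 * m - 2 * m - 2 * 5) = 8 * m) :
    (m = 6 ∧ km = 5 ∧ kn = 6) ∨
      (m = 10 ∧ km = 2 ∧ kn = 4) ∨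
      (m = 5 ∧ km = 8 ∧ kn = 8) := by
  interval_cases m <;> omega

set_option maxHeartbeats 2000000 in
private lemma aux6 (m km kn : ℤ) (hkm : 0 < km) (hkn : 0 < kn)
    (h5 : 5 ≤ m) (hnm : 6 ≤ m) (hb : m ≤ 27)
    (he : kn * 6 = km * m)
    (hq : kn * (6 * m - 2 * m - 2 * 6) = 8 * m) :
    (m = 9 ∧ km = 2 ∧ kn = 3) ∨
      (m = 6 ∧ km = 4 ∧ kn = 4) := by
  interval_cases m <;> omega

set_option maxHeartbeats 2000000 in
private lemma aux7 (m km kn : ℤ) (hkm : 0 < km) (hkn : 0 < kn)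
    (h5 : 5 ≤ m) (hnm : 7 ≤ m) (hb : m ≤ 25)
    (he : kn * 7 = km * m)
    (hq : kn * (7 * m - 2 * m - 2 * 7) = 8 * m) :
    (m = 14 ∧ km = 1 ∧ kn = 2) := by
  interval_cases m <;> omega

set_option maxHeartbeats 2000000 in
private lemma aux8 (m km kn : ℤ) (hkm : 0 < km) (hkn : 0 < kn)
    (h5 : 5 ≤ m) (hnm : 8 ≤ m) (hb : m ≤ 24)
    (he : kn * 8 = km * m)
    (hq : kn * (8 * m - 2 * m - 2 * 8) = 8 * m) :
    (m = 8 ∧ km = 2 ∧ kn = 2) := by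
  interval_cases m <;> omega

set_option maxHeartbeats 2000000 in
private lemma aux9 (m km kn : ℤ) (hkm : 0 < km) (hkn : 0 < kn)
    (h5 : 5 ≤ m) (hnm : 9 ≤ m) (hb : m ≤ 23)
    (he : kn * 9 = km * m)
    (hq : kn * (9 * m - 2 * m - 2 * 9) = 8 * m) :
    False := by
  interval_cases m <;> omega

set_option maxHeartbeats 2000000 in
private lemma aux10 (m km kn : ℤ) (hkm : 0 < km) (hkn : 0 < kn)
    (h5 : 5 ≤ m) (hnm : 10 ≤ m) (hb : m ≤ 22)
    (he : kn * 10 = km * m)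
    (hq : kn * (10 * m - 2 * m - 2 * 10) = 8 * m) :
    False := by
  interval_cases m <;> omega

set_option maxHeartbeats 2000000 in
private lemma aux11 (m km kn : ℤ) (hkm : 0 < km) (hkn : 0 < kn)
    (h5 : 5 ≤ m) (hnm : 11 ≤ m) (hb : m ≤ 22)
    (he : kn * 11 = km * m)
    (hq : kn * (11 * m - 2 * m - 2 * 11) = 8 * m) :
    False := by
  interval_cases m <;> omega

set_option maxHeartbeats 2000000 in
private lemma aux12 (m km kn : ℤ) (hkm : 0 < km) (hkn : 0 < kn)
    (h5 : 5 ≤ m) (hnm : 12 ≤ m) (hb : m ≤ 21)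
    (he : kn * 12 = km * m)
    (hq : kn * (12 * m - 2 * m - 2 * 12) = 8 * m) :
    (m = 12 ∧ km = 1 ∧ kn = 1) := by
  interval_cases m <;> omega

set_option maxHeartbeats 2000000 in
theorem stmt_15 :
    {q : ℤ × ℤ × ℤ × ℤ |
      0 < q.1 ∧ 0 < q.2.1 ∧ 0 < q.2.2.1 ∧ 0 < q.2.2.2 ∧
      3 ≤ q.2.1 ∧ q.2.1 ≤ q.1 ∧ 5 ≤ q.1 ∧
      q.2.2.2 * q.2.1 = q.2.2.1 * q.1 ∧
      q.2.2.2 * (q.2.1 * q.1 - 2 * q.1 - 2 * q.2.1) = 8 * q.1} =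
    ({(5,4,16,20), (6,4,8,12), (6,5,5,6), (7,3,24,56), (8,3,12,32), (8,4,4,8),
      (9,3,8,24), (9,6,2,3), (10,3,6,20), (10,5,2,4), (12,3,4,16), (12,4,2,6),
      (14,3,3,14), (14,7,1,2), (18,3,2,12), (20,4,1,5), (30,3,1,10),
      (12,12,1,1), (8,8,2,2), (6,6,4,4), (5,5,8,8)} : Set (ℤ × ℤ × ℤ × ℤ)) := by
  ext ⟨m, n, km, kn⟩
  simp only [Set.mem_setOf_eq, Set.mem_insert_iff, Set.mem_singleton_iff, Prod.mk.injEq]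
  constructor
  · rintro ⟨hm, hn, hkm, hkn, h3, hnm, h5, he, hq⟩
    have hd : 0 < n * m - 2 * m - 2 * n := by nlinarith
    have h16 : (n * m - 2 * m - 2 * n) * (kn * (n - 2) - 8) = 16 * n := by
      linear_combination (n - 2) * hq
    have hk2 : 1 ≤ kn * (n - 2) - 8 := by nlinarith
    have hdle : n * m - 2 * m - 2 * n ≤ 16 * n := by nlinarith
    have hn12 : n ≤ 12 := by nlinarith
    have hmb : m * (n - 2) ≤ 18 * n := by nlinarith
    clear hd h16 hk2 hdle hm hn
    interval_cases n
    · rcases aux3 m km kn hkm hkn h5 hnm (by omega) he hq with (⟨rfl, rfl, rfl⟩|⟨rfl, rfl, rfl⟩|⟨rfl, rfl, rfl⟩|⟨rfl, rfl, rfl⟩|⟨rfl, rfl, rfl⟩|⟨rfl, rfl, rfl⟩|⟨rfl, rfl, rfl⟩|⟨rfl, rfl, rfl⟩) <;> norm_num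
    · rcases aux4 m km kn hkm hkn h5 hnm (by omega) he hq with (⟨rfl, rfl, rfl⟩|⟨rfl, rfl, rfl⟩|⟨rfl, rfl, rfl⟩|⟨rfl, rfl, rfl⟩|⟨rfl, rfl, rfl⟩) <;> norm_num
    · rcases aux5 m km kn hkm hkn h5 hnm (by omega) he hq with (⟨rfl, rfl, rfl⟩|⟨rfl, rfl, rfl⟩|⟨rfl, rfl, rfl⟩) <;> norm_num
    · rcases aux6 m km kn hkm hkn h5 hnm (by omega) he hq with (⟨rfl, rfl, rfl⟩|⟨rfl, rfl, rfl⟩) <;> norm_num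
    · rcases aux7 m km kn hkm hkn h5 hnm (by omega) he hq with (⟨rfl, rfl, rfl⟩) <;> norm_num
    · rcases aux8 m km kn hkm hkn h5 hnm (by omega) he hq with (⟨rfl, rfl, rfl⟩) <;> norm_num
    · exact (aux9 m km kn hkm hkn h5 hnm (by omega) he hq).elim
    · exact (aux10 m km kn hkm hkn h5 hnm (by omega) he hq).elim
    · exact (aux11 m km kn hkm hkn h5 hnm (by omega) he hq).elim
    · rcases aux12 m km kn hkm hkn h5 hnm (by omega) he hq with (⟨rfl, rfl, rfl⟩) <;> norm_num
  · rintro (h|h|h|h|h|h|h|h|h|h|h|h|h|h|h|h|h|h|h|h|h) <;>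
      (obtain ⟨rfl, rfl, rfl, rfl⟩ := h; norm_num)
end
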